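/- arXiv:2112.14505 — 2 statements merged into one kernel-verified Lean document; each statement's English description precedes it below -/
import Mathlib

section
/- Let s ∈ (0,1), m > 0, and g: ℝ^N\{0} → ℝ locally integrable and nonnegative. Then for any R ≥ m^{1/N}, the minimization problem inf{ P_s(E) + V_g(E) : E ⊆ Q_R measurable, |E| = m } admits a minimizer, where Q_R is the cube of side length R. -/
/-!
Direct method. Along a minimizing sequence the fractional perimeters stay bounded, and this gives
compactness in `L¹` through a Poincaré inequality on the cells of a grid: two points of a cell `Q`
of side `δ` are at distance at most `√N δ`, so `|A ∩ Q| |Q \ A| ≤ (√N δ)^(N+s) P_s(A; Q)`, where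
`P_s(A; Q)` is the part of `P_s(A)` coming from `A ∩ Q`. Summing over the cells,
`|A Δ B| ≤ ∑_Q ||A ∩ Q| - |B ∩ Q|| + 2 √N^(N+s) δ^s (P_s(A) + P_s(B))`.
A diagonal subsequence, along which the masses of all cells of all grids of mesh `1/(k+1)`
converge, is therefore Cauchy for `|A Δ B|`, and a fast Cauchy subsequence converges almost
everywhere (Borel–Cantelli). The volume constraint passes to the limit by dominated convergence
in the cube, and `P_s` and `V_g` are lower semicontinuous by Fatou's lemma on the product space.
-/

open MeasureTheory ENNReal Set

noncomputable def fracKer (N : ℕ) (s : ℝ) (x : EuclideanSpace ℝ (Fin N)) : ℝ≥0∞ :=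
  ENNReal.ofReal (‖x‖ ^ (-((N : ℝ) + s)))

noncomputable def fracPer (N : ℕ) (s : ℝ) (E : Set (EuclideanSpace ℝ (Fin N))) : ℝ≥0∞ :=
  ∫⁻ x in E, ∫⁻ y in Eᶜ, fracKer N s (x - y)

noncomputable def rieszPot (N : ℕ) (g : EuclideanSpace ℝ (Fin N) → ℝ)
    (E : Set (EuclideanSpace ℝ (Fin N))) : ℝ≥0∞ :=
  ∫⁻ x in E, ∫⁻ y in E, ENNReal.ofReal (g (x - y))

/-- The (closed) cube of side length `R` centered at the origin. -/
def cube (N : ℕ) (R : ℝ) : Set (EuclideanSpace ℝ (Fin N)) :=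
  {x | ∀ i : Fin N, |x i| ≤ R / 2}

open Filter Topology

theorem ENNReal.liminf_add_liminf_le (u v : ℕ → ℝ≥0∞) :
    liminf u atTop + liminf v atTop ≤ liminf (fun i => u i + v i) atTop := by
  simp only [liminf_eq_iSup_iInf_of_nat]
  exact ENNReal.iSup_add_iSup_le fun m n => le_iSup_of_le (max m n) <| le_iInf₂ fun i hi =>
    add_le_add (iInf₂_le i (le_of_max_le_left hi)) (iInf₂_le i (le_of_max_le_right hi))

theorem exists_isMinOn_of_forall_exists_le_liminf {β : Type*} {S : Set β} {J : β → ℝ≥0∞}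
    (hS : S.Nonempty)
    (h : ∀ A : ℕ → β, (∀ n, A n ∈ S) → ∀ M ≠ ∞, (∀ n, J (A n) ≤ M) →
      ∃ E ∈ S, ∃ φ : ℕ → ℕ, StrictMono φ ∧ J E ≤ liminf (fun i => J (A (φ i))) atTop) :
    ∃ E ∈ S, IsMinOn J S E := by
  set I := ⨅ x ∈ S, J x
  by_cases hI : I = ∞
  · obtain ⟨E, hE⟩ := hS
    exact ⟨E, hE, fun x hx => le_top.trans (hI.symm.trans_le (iInf₂_le x hx))⟩
  have hA : ∀ n : ℕ, ∃ A ∈ S, J A < I + 2⁻¹ ^ n := fun n =>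
    by simpa [I, iInf_lt_iff] using ENNReal.lt_add_right hI (by simp)
  choose A hAS hAJ using hA
  have hlim : Tendsto (fun n => J (A n)) atTop (𝓝 I) := by
    refine tendsto_of_tendsto_of_tendsto_of_le_of_le tendsto_const_nhds ?_
      (fun n => iInf₂_le _ (hAS n)) fun n => (hAJ n).le
    simpa using (ENNReal.tendsto_pow_atTop_nhds_zero_of_lt_one
      (ENNReal.inv_lt_one.2 one_lt_two)).const_add I
  obtain ⟨E, hES, φ, hφ, hE⟩ := h A hAS (I + 1) (by simpa using hI) fun n =>
    (hAJ n).le.trans (by gcongr; exact pow_le_one₀ zero_le (ENNReal.inv_le_one.2 one_le_two))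
  exact ⟨E, hES, fun x hx => hE.trans
    ((hlim.comp hφ.tendsto_atTop).liminf_eq.le.trans (iInf₂_le x hx))⟩

section MeasureTheory

variable {α β : Type*} [MeasurableSpace α] [MeasurableSpace β] {μ : Measure α}

/-- In `ℝ≥0∞`, `(a - b) + (b - a)` is the distance `|a - b|`. -/
theorem measure_mul_measure_symmDiff_inter_le {A B Q : Set α} (hA : MeasurableSet A)
    (hB : MeasurableSet B) (hQ : μ Q ≠ ∞) :
    μ Q * μ (symmDiff A B ∩ Q) ≤
      μ Q * ((μ (A ∩ Q) - μ (B ∩ Q)) + (μ (B ∩ Q) - μ (A ∩ Q))) +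
        2 * (μ (A ∩ Q) * μ (Q \ A) + μ (B ∩ Q) * μ (Q \ B)) := by
  wlog hba : μ (B ∩ Q) ≤ μ (A ∩ Q) generalizing A B
  · simpa only [symmDiff_comm, add_comm] using this hB hA (le_of_not_ge hba)
  set v := μ ((B ∩ Q) \ A)
  have hsplit : μ (symmDiff A B ∩ Q) = μ ((A ∩ Q) \ B) + v := by
    rw [← measure_inter_add_sdiff _ hA]
    congr 2 <;> ext x <;> simp only [mem_symmDiff, mem_inter_iff, Set.mem_sdiff] <;> tauto
  have hAB : μ ((A ∩ Q) \ B) ≤ (μ (A ∩ Q) - μ (B ∩ Q)) + v := by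
    have hcommon : B ∩ Q ∩ A = A ∩ Q ∩ B := by
      rw [inter_right_comm, inter_comm B, inter_right_comm]
    have hc : μ (A ∩ Q ∩ B) ≠ ∞ :=
      measure_ne_top_of_subset (inter_subset_left.trans inter_subset_right) hQ
    refine (ENNReal.add_le_add_iff_left hc).1 ?_
    calc μ (A ∩ Q ∩ B) + μ ((A ∩ Q) \ B) = μ (A ∩ Q) := measure_inter_add_sdiff _ hB
      _ ≤ (μ (A ∩ Q) - μ (B ∩ Q)) + μ (B ∩ Q) := le_tsub_add
      _ = μ (A ∩ Q ∩ B) + ((μ (A ∩ Q) - μ (B ∩ Q)) + v) := by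
        rw [← measure_inter_add_sdiff (B ∩ Q) hA, hcommon]; ring
  have hvB : v ≤ μ (B ∩ Q) := measure_mono sdiff_subset
  have hvA : v ≤ μ (Q \ A) := measure_mono fun x hx => ⟨hx.1.2, hx.2⟩
  have hQAB : μ (Q \ A) ≤ μ (Q \ B) := by
    have hQdiff : ∀ S, MeasurableSet S → μ (Q \ S) = μ Q - μ (S ∩ Q) := fun S hS => by
      rw [← measure_inter_add_sdiff Q hS, inter_comm,
        ENNReal.add_sub_cancel_left (measure_ne_top_of_subset inter_subset_right hQ)]
    rw [hQdiff A hA, hQdiff B hB]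
    exact tsub_le_tsub_left hba _
  have hQv : μ Q * v ≤ μ (A ∩ Q) * μ (Q \ A) + μ (B ∩ Q) * μ (Q \ B) :=
    calc μ Q * v = μ (A ∩ Q) * v + μ (Q \ A) * v := by
          rw [← add_mul, inter_comm, measure_inter_add_sdiff Q hA]
      _ ≤ μ (A ∩ Q) * μ (Q \ A) + μ (Q \ B) * μ (B ∩ Q) := by gcongr
      _ = _ := by rw [mul_comm (μ (Q \ B))]
  calc μ Q * μ (symmDiff A B ∩ Q)
      ≤ μ Q * ((μ (A ∩ Q) - μ (B ∩ Q)) + v + v) := by rw [hsplit]; gcongr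
    _ = μ Q * (μ (A ∩ Q) - μ (B ∩ Q)) + 2 * (μ Q * v) := by ring
    _ ≤ _ := by rw [tsub_eq_zero_of_le hba, add_zero]; gcongr

theorem ae_eventually_mem_iff_mem_liminf {F : ℕ → Set α}
    (h : ∑' i, μ (symmDiff (F i) (F (i + 1))) ≠ ∞) :
    ∀ᵐ x ∂μ, ∀ᶠ i in atTop, (x ∈ F i ↔ x ∈ liminf F atTop) := by
  filter_upwards [ae_eventually_notMem h] with x hx
  obtain ⟨n₀, hn₀⟩ := eventually_atTop.1 hx
  have hconst : EventuallyConst (fun i => x ∈ F i) atTop :=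
    eventuallyConst_atTop_nat.2 ⟨n₀, fun i hi => propext <| by
      have := hn₀ i hi
      simp only [mem_symmDiff, not_or, not_and, not_not] at this
      tauto⟩
  obtain ⟨c, hc⟩ := eventuallyConst_iff_exists_eventuallyEq.1 hconst
  have hlim : x ∈ liminf F atTop ↔ c := by
    rw [mem_liminf_iff_eventually_mem, eventually_congr (hc.mono fun i hi => iff_of_eq hi),
      eventually_const]
  filter_upwards [hc] with i hi
  exact (iff_of_eq hi).trans hlim.symm

theorem exists_subseq_ae_eventually_mem_iff_mem_liminf {F : ℕ → Set α}
    (hF : ∀ ε > 0, ∃ n₀, ∀ i ≥ n₀, ∀ j ≥ n₀, μ (symmDiff (F i) (F j)) ≤ ε) :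
    ∃ φ : ℕ → ℕ, StrictMono φ ∧
      ∀ᵐ x ∂μ, ∀ᶠ i in atTop, (x ∈ F (φ i) ↔ x ∈ liminf (F ∘ φ) atTop) := by
  obtain ⟨φ, hφ, hφF⟩ := extraction_forall_of_eventually'
    (P := fun n k => ∀ j ≥ k, μ (symmDiff (F k) (F j)) ≤ 2⁻¹ ^ n) fun n => by
      obtain ⟨n₀, hn₀⟩ :=
        hF (2⁻¹ ^ n) (ENNReal.pow_pos (ENNReal.inv_pos.2 ENNReal.ofNat_ne_top) n)
      exact ⟨n₀, fun k hk j hj => hn₀ k hk j (hk.trans hj)⟩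
  refine ⟨φ, hφ, ae_eventually_mem_iff_mem_liminf (ne_top_of_le_ne_top ?_
    (ENNReal.tsum_le_tsum fun i => hφF i _ (hφ.monotone i.le_succ)))⟩
  rw [ENNReal.tsum_geometric, ENNReal.one_sub_inv_two, inv_inv]
  exact ENNReal.ofNat_ne_top

theorem setLIntegral_prod_le_liminf {ν : Measure β} [SFinite ν] {k : α × β → ℝ≥0∞}
    (hk : AEMeasurable k (μ.prod ν)) {F : ℕ → Set α} {G : ℕ → Set β} {E : Set α} {H : Set β}
    (hF : ∀ i, MeasurableSet (F i)) (hG : ∀ i, MeasurableSet (G i)) (hE : MeasurableSet E)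
    (hH : MeasurableSet H) (hFE : ∀ᵐ x ∂μ, ∀ᶠ i in atTop, (x ∈ F i ↔ x ∈ E))
    (hGH : ∀ᵐ y ∂ν, ∀ᶠ i in atTop, (y ∈ G i ↔ y ∈ H)) :
    ∫⁻ p in E ×ˢ H, k p ∂μ.prod ν ≤
      liminf (fun i => ∫⁻ p in F i ×ˢ G i, k p ∂μ.prod ν) atTop := by
  simp only [← lintegral_indicator (hE.prod hH), ← lintegral_indicator ((hF _).prod (hG _))]
  refine le_of_eq_of_le (lintegral_congr_ae ?_)
    (lintegral_liminf_le' fun i => hk.indicator ((hF i).prod (hG i)))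
  filter_upwards [Measure.quasiMeasurePreserving_fst.ae hFE,
    Measure.quasiMeasurePreserving_snd.ae hGH] with p hp₁ hp₂
  refine (Tendsto.liminf_eq (tendsto_const_nhds.congr' ?_)).symm
  filter_upwards [hp₁, hp₂] with i hi₁ hi₂
  have hmem : p ∈ F i ×ˢ G i ↔ p ∈ E ×ˢ H := and_congr hi₁ hi₂
  by_cases hp : p ∈ E ×ˢ H
  · rw [indicator_of_mem hp, indicator_of_mem (hmem.2 hp)]
  · rw [indicator_of_notMem hp, indicator_of_notMem (mt hmem.1 hp)]

end MeasureTheory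

theorem tendsto_sum_tsub_add_tsub {ι : Type*} (T : Finset ι) {x : ℕ → ι → ℝ≥0∞}
    {L : ι → ℝ≥0∞} (hL : ∀ v, L v ≠ ∞) (hx : ∀ v, Tendsto (fun n => x n v) atTop (𝓝 (L v))) :
    Tendsto (fun p : ℕ × ℕ => ∑ v ∈ T, ((x p.1 v - x p.2 v) + (x p.2 v - x p.1 v)))
      atTop (𝓝 0) := by
  rw [← prod_atTop_atTop_eq]
  have hsub : ∀ v, ∀ f g : ℕ × ℕ → ℕ, Tendsto f (atTop ×ˢ atTop) atTop →
      Tendsto g (atTop ×ˢ atTop) atTop →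
      Tendsto (fun p => x (f p) v - x (g p) v) (atTop ×ˢ atTop) (𝓝 0) := fun v f g hf hg => by
    simpa using ENNReal.Tendsto.sub ((hx v).comp hf) ((hx v).comp hg) (Or.inl (hL v))
  simpa using tendsto_finsetSum T fun v _ =>
    (hsub v _ _ tendsto_fst tendsto_snd).add (hsub v _ _ tendsto_snd tendsto_fst)

section Euclidean

variable {N : ℕ} {s : ℝ}

local notation "X" => EuclideanSpace ℝ (Fin N)

theorem volume_setOf_forall_mem (S : Fin N → Set ℝ) :
    volume {x : X | ∀ i, x i ∈ S i} = ∏ i, volume (S i) := by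
  rw [← volume_pi_pi, ← (EuclideanSpace.volume_preserving_symm_measurableEquiv_toLp
    (Fin N)).measure_preimage_equiv]
  congr 1
  ext x
  simp [Set.mem_pi]

theorem cube_mono {r R : ℝ} (h : r ≤ R) : cube N r ⊆ cube N R :=
  fun _ hx i => (hx i).trans (by linarith)

theorem volume_cube (R : ℝ) : volume (cube N R) = ENNReal.ofReal R ^ N := by
  have : cube N R = {x : X | ∀ i, x i ∈ Icc (-(R / 2)) (R / 2)} := by
    ext x; simp [cube, abs_le]
  rw [this, volume_setOf_forall_mem]
  simp [Real.volume_Icc]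

theorem measurableSet_cube (R : ℝ) : MeasurableSet (cube N R) := by
  simp only [cube, ofPred_forall]
  exact .iInter fun i => measurableSet_le (by fun_prop) measurable_const

theorem isBounded_cube (R : ℝ) : Bornology.IsBounded (cube N R) := by
  have : cube N R = WithLp.toLp 2 '' Icc (fun _ => -(R / 2)) (fun _ => R / 2) := by
    ext x
    refine ⟨fun hx => ⟨x.ofLp, ⟨fun i => (abs_le.1 (hx i)).1, fun i => (abs_le.1 (hx i)).2⟩,
      rfl⟩, ?_⟩
    rintro ⟨y, hy, rfl⟩ i
    exact abs_le.2 ⟨hy.1 i, hy.2 i⟩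
  rw [this]
  exact (PiLp.lipschitzWith_toLp 2 _).isBounded_image (Metric.isBounded_Icc _ _)

def gridBox (δ : ℝ) (v : Fin N → ℤ) : Set X :=
  {x | ∀ i, ⌊x i / δ⌋ = v i}

theorem mem_gridBox_floor (δ : ℝ) (x : X) : x ∈ gridBox δ (fun i => ⌊x i / δ⌋) :=
  fun _ => rfl

theorem pairwise_disjoint_gridBox (δ : ℝ) :
    Pairwise (Function.onFun Disjoint (gridBox δ : (Fin N → ℤ) → Set X)) :=
  fun _ _ hvw => Set.disjoint_left.2 fun _ hv hw =>
    hvw (funext fun i => (hv i).symm.trans (hw i))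

theorem measurableSet_gridBox (δ : ℝ) (v : Fin N → ℤ) : MeasurableSet (gridBox δ v) := by
  simp only [gridBox, ofPred_forall]
  exact .iInter fun i => measurableSet_eq_fun (by fun_prop) measurable_const

theorem gridBox_eq {δ : ℝ} (hδ : 0 < δ) (v : Fin N → ℤ) :
    gridBox δ v = {x : X | ∀ i, x i ∈ Ico (v i * δ) ((v i + 1) * δ)} := by
  ext x
  simp [gridBox, Int.floor_eq_iff, le_div_iff₀ hδ, div_lt_iff₀ hδ]

theorem volume_gridBox {δ : ℝ} (hδ : 0 < δ) (v : Fin N → ℤ) :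
    volume (gridBox δ v) = ENNReal.ofReal δ ^ N := by
  rw [gridBox_eq hδ, volume_setOf_forall_mem]
  simp [Real.volume_Ico, add_mul]

theorem norm_sub_le_of_mem_gridBox {δ : ℝ} (hδ : 0 < δ) {v : Fin N → ℤ} {x y : X}
    (hx : x ∈ gridBox δ v) (hy : y ∈ gridBox δ v) : ‖x - y‖ ≤ Real.sqrt N * δ := by
  rw [gridBox_eq hδ] at hx hy
  have hcoord : ∀ i, ‖(x - y) i‖ ^ 2 ≤ δ ^ 2 := fun i => by
    have := hx i; have := hy i
    simp only [mem_Ico, PiLp.sub_apply, Real.norm_eq_abs, sq_abs] at *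
    nlinarith
  rw [EuclideanSpace.norm_eq, ← Real.sqrt_sq hδ.le, ← Real.sqrt_mul (Nat.cast_nonneg N)]
  refine Real.sqrt_le_sqrt ((Finset.sum_le_sum fun i _ => hcoord i).trans ?_)
  simp

theorem exists_finset_subset_iUnion_gridBox {δ : ℝ} (hδ : 0 < δ) {K : Set X}
    (hK : Bornology.IsBounded K) : ∃ T : Finset (Fin N → ℤ), K ⊆ ⋃ v ∈ T, gridBox δ v := by
  obtain ⟨r, hr⟩ := hK.subset_closedBall 0
  refine ⟨Fintype.piFinset fun _ => Finset.Icc ⌊-r / δ⌋ ⌊r / δ⌋, fun x hx => ?_⟩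
  refine mem_biUnion (Fintype.mem_piFinset.2 fun i => ?_) (mem_gridBox_floor δ x)
  have := (PiLp.norm_apply_le x i).trans (mem_closedBall_zero_iff.1 (hr hx))
  rw [Real.norm_eq_abs, abs_le] at this
  exact Finset.mem_Icc.2 ⟨Int.floor_mono (by gcongr; linarith),
    Int.floor_mono (by gcongr; linarith)⟩

noncomputable def fracPerIn (N : ℕ) (s : ℝ) (A Q : Set (EuclideanSpace ℝ (Fin N))) : ℝ≥0∞ :=
  ∫⁻ x in A ∩ Q, ∫⁻ y in Aᶜ, fracKer N s (x - y)

theorem one_le_ofReal_rpow_mul_fracKer (hs : 0 ≤ s) {x : X} {d : ℝ} (hx : x ≠ 0)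
    (hxd : ‖x‖ ≤ d) : 1 ≤ ENNReal.ofReal (d ^ ((N : ℝ) + s)) * fracKer N s x := by
  have hx0 : 0 < ‖x‖ := norm_pos_iff.2 hx
  rw [fracKer, ← ENNReal.ofReal_mul (Real.rpow_nonneg (hx0.le.trans hxd) _),
    ← ENNReal.ofReal_one]
  refine ENNReal.ofReal_le_ofReal ?_
  rw [Real.rpow_neg hx0.le, ← div_eq_mul_inv, one_le_div (Real.rpow_pos_of_pos hx0 _)]
  exact Real.rpow_le_rpow hx0.le hxd (by positivity)

theorem volume_inter_mul_volume_diff_le_fracPerIn (hs : 0 ≤ s) {A Q : Set X}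
    (hA : MeasurableSet A) (hQ : MeasurableSet Q) {d : ℝ}
    (hQd : ∀ x ∈ Q, ∀ y ∈ Q, ‖x - y‖ ≤ d) :
    volume (A ∩ Q) * volume (Q \ A) ≤
      ENNReal.ofReal (d ^ ((N : ℝ) + s)) * fracPerIn N s A Q := by
  set C := ENNReal.ofReal (d ^ ((N : ℝ) + s))
  have hC : C ≠ ∞ := ENNReal.ofReal_ne_top
  calc volume (A ∩ Q) * volume (Q \ A) = ∫⁻ _ in A ∩ Q, ∫⁻ _ in Q \ A, 1 := by
        simp [mul_comm]
    _ ≤ ∫⁻ x in A ∩ Q, ∫⁻ y in Q \ A, C * fracKer N s (x - y) :=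
        setLIntegral_mono' (hA.inter hQ) fun x hx => setLIntegral_mono' (hQ.diff hA) fun y hy =>
          one_le_ofReal_rpow_mul_fracKer hs (sub_ne_zero.2 fun h => hy.2 (h ▸ hx.1))
            (hQd x hx.2 y hy.1)
    _ ≤ ∫⁻ x in A ∩ Q, ∫⁻ y in Aᶜ, C * fracKer N s (x - y) := by
        gcongr
        exact sdiff_subset_compl Q A
    _ = C * fracPerIn N s A Q := by
        simp only [fracPerIn, lintegral_const_mul' _ _ hC]

theorem volume_symmDiff_inter_gridBox_le (hs : 0 ≤ s) {δ : ℝ} (hδ : 0 < δ) {A B : Set X}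
    (hA : MeasurableSet A) (hB : MeasurableSet B) (v : Fin N → ℤ) :
    volume (symmDiff A B ∩ gridBox δ v) ≤
      ((volume (A ∩ gridBox δ v) - volume (B ∩ gridBox δ v)) +
        (volume (B ∩ gridBox δ v) - volume (A ∩ gridBox δ v))) +
      2 * ENNReal.ofReal (Real.sqrt N ^ ((N : ℝ) + s) * δ ^ s) *
        (fracPerIn N s A (gridBox δ v) + fracPerIn N s B (gridBox δ v)) := by
  set Q := gridBox δ v
  set c := ENNReal.ofReal (Real.sqrt N ^ ((N : ℝ) + s) * δ ^ s)
  have hQ : volume Q = ENNReal.ofReal (δ ^ N) := by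
    rw [volume_gridBox hδ, ENNReal.ofReal_pow hδ.le]
  have hC : ENNReal.ofReal ((Real.sqrt N * δ) ^ ((N : ℝ) + s)) = volume Q * c := by
    rw [hQ, ← ENNReal.ofReal_mul (by positivity), Real.mul_rpow (by positivity) hδ.le,
      Real.rpow_add hδ, Real.rpow_natCast]
    ring_nf
  have hker := fun S (hS : MeasurableSet S) => volume_inter_mul_volume_diff_le_fracPerIn hs hS
    (measurableSet_gridBox δ v) (d := Real.sqrt N * δ)
    (fun _ hx _ hy => norm_sub_le_of_mem_gridBox hδ hx hy)
  rw [hC] at hker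
  have hQ0 : volume Q ≠ 0 := by simp [hQ, hδ]
  have hQtop : volume Q ≠ ∞ := by simp [hQ]
  refine (ENNReal.mul_le_mul_iff_right hQ0 hQtop).1 ?_
  calc volume Q * volume (symmDiff A B ∩ Q)
      ≤ _ := measure_mul_measure_symmDiff_inter_le hA hB hQtop
    _ ≤ volume Q * ((volume (A ∩ Q) - volume (B ∩ Q)) +
            (volume (B ∩ Q) - volume (A ∩ Q))) +
          2 * (volume Q * c * fracPerIn N s A Q + volume Q * c * fracPerIn N s B Q) := by
        gcongr _ + 2 * (?_ + ?_)
        exacts [hker A hA, hker B hB]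
    _ = _ := by ring

theorem sum_fracPerIn_gridBox_le {δ : ℝ} {A : Set X} (hA : MeasurableSet A)
    (T : Finset (Fin N → ℤ)) : ∑ v ∈ T, fracPerIn N s A (gridBox δ v) ≤ fracPer N s A := by
  simp only [fracPerIn]
  rw [← lintegral_biUnion_finset
    (fun _ _ _ _ hvw => (pairwise_disjoint_gridBox δ hvw).mono inter_subset_right
      inter_subset_right)
    fun v _ => hA.inter (measurableSet_gridBox δ v)]
  exact lintegral_mono_set (iUnion₂_subset fun _ _ => inter_subset_left)

theorem volume_symmDiff_le_sum_gridBox (hs : 0 ≤ s) {δ : ℝ} (hδ : 0 < δ) {A B : Set X}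
    (hA : MeasurableSet A) (hB : MeasurableSet B) {T : Finset (Fin N → ℤ)}
    (hAT : A ⊆ ⋃ v ∈ T, gridBox δ v) (hBT : B ⊆ ⋃ v ∈ T, gridBox δ v) :
    volume (symmDiff A B) ≤
      ∑ v ∈ T, ((volume (A ∩ gridBox δ v) - volume (B ∩ gridBox δ v)) +
        (volume (B ∩ gridBox δ v) - volume (A ∩ gridBox δ v))) +
      2 * ENNReal.ofReal (Real.sqrt N ^ ((N : ℝ) + s) * δ ^ s) *
        (fracPer N s A + fracPer N s B) := by
  have hcover : symmDiff A B ⊆ ⋃ v ∈ T, symmDiff A B ∩ gridBox δ v := by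
    rw [← inter_iUnion₂]
    exact subset_inter subset_rfl (symmDiff_subset_union.trans (union_subset hAT hBT))
  calc volume (symmDiff A B) ≤ ∑ v ∈ T, volume (symmDiff A B ∩ gridBox δ v) :=
        (measure_mono hcover).trans (measure_biUnion_finset_le T _)
    _ ≤ _ := Finset.sum_le_sum fun v _ => volume_symmDiff_inter_gridBox_le hs hδ hA hB v
    _ ≤ _ := by
        simp only [Finset.sum_add_distrib, ← Finset.mul_sum]
        gcongr _ + _ * (?_ + ?_)
        exacts [sum_fracPerIn_gridBox_le hA T, sum_fracPerIn_gridBox_le hB T]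

theorem tendsto_ofReal_mul_one_div_add_one_rpow (hs : 0 < s) (c : ℝ) :
    Tendsto (fun k : ℕ => ENNReal.ofReal (c * (1 / ((k : ℝ) + 1)) ^ s)) atTop (𝓝 0) := by
  have h := ((Real.continuousAt_rpow_const 0 s (Or.inr hs.le)).tendsto.comp
    tendsto_one_div_add_atTop_nhds_zero_nat).const_mul c
  simpa [Real.zero_rpow hs.ne'] using ENNReal.tendsto_ofReal h

theorem exists_subseq_volume_symmDiff_le (hs : 0 < s) {K : Set X}
    (hK : Bornology.IsBounded K) {A : ℕ → Set X} (hAK : ∀ n, A n ⊆ K)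
    (hA : ∀ n, MeasurableSet (A n)) {M : ℝ≥0∞} (hM : M ≠ ∞)
    (hAM : ∀ n, fracPer N s (A n) ≤ M) :
    ∃ φ : ℕ → ℕ, StrictMono φ ∧
      ∀ ε > 0, ∃ n₀, ∀ i ≥ n₀, ∀ j ≥ n₀, volume (symmDiff (A (φ i)) (A (φ j))) ≤ ε := by
  set δ : ℕ → ℝ := fun k => 1 / ((k : ℝ) + 1)
  have hδ : ∀ k, 0 < δ k := fun k => by positivity
  -- The cells of all the grids form a countable family, so `(ℕ × (Fin N → ℤ)) → ℝ≥0∞` is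
  -- sequentially compact: one subsequence makes the mass of every cell converge.
  obtain ⟨L, φ, hφ, hL⟩ := CompactSpace.tendsto_subseq
    fun n (p : ℕ × (Fin N → ℤ)) => volume (A n ∩ gridBox (δ p.1) p.2)
  have hLp := tendsto_pi_nhds.1 hL
  have hLfin : ∀ p, L p ≠ ∞ := fun p => ne_top_of_le_ne_top hK.measure_lt_top.ne <|
    le_of_tendsto' (hLp p) fun n => measure_mono (inter_subset_left.trans (hAK _))
  refine ⟨φ, hφ, fun ε hε => ?_⟩
  have hε2 : 0 < ε / 2 := ENNReal.half_pos hε.ne'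
  have hconst : Tendsto
      (fun k => 2 * ENNReal.ofReal (Real.sqrt N ^ ((N : ℝ) + s) * δ k ^ s) * (M + M))
      atTop (𝓝 0) := by
    have h := ENNReal.Tendsto.mul_const (ENNReal.Tendsto.const_mul
      (tendsto_ofReal_mul_one_div_add_one_rpow hs (Real.sqrt N ^ ((N : ℝ) + s)))
      (Or.inr (ENNReal.ofNat_ne_top (n := 2)))) (Or.inr (ENNReal.add_ne_top.2 ⟨hM, hM⟩))
    rwa [mul_zero, zero_mul] at h
  obtain ⟨k, hk⟩ := (hconst.eventually (gt_mem_nhds hε2)).exists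
  obtain ⟨T, hT⟩ := exists_finset_subset_iUnion_gridBox (hδ k) hK
  obtain ⟨n₀, hn₀⟩ := eventually_atTop_prod_self'.1 <|
    (tendsto_sum_tsub_add_tsub T (fun v => hLfin (k, v)) fun v => hLp (k, v)).eventually
      (gt_mem_nhds hε2)
  refine ⟨n₀, fun i hi j hj => ?_⟩
  calc volume (symmDiff (A (φ i)) (A (φ j)))
      ≤ _ := volume_symmDiff_le_sum_gridBox hs.le (hδ k) (hA _) (hA _)
        ((hAK _).trans hT) ((hAK _).trans hT)
    _ ≤ ε / 2 + ε / 2 := by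
        gcongr
        · exact (hn₀ i hi j hj).le
        · exact le_trans (by gcongr <;> exact hAM _) hk.le
    _ = ε := ENNReal.add_halves ε

theorem exists_subseq_ae_eventually_mem_iff_of_fracPer_le (hs : 0 < s) {K : Set X}
    (hK : Bornology.IsBounded K) {A : ℕ → Set X} (hAK : ∀ n, A n ⊆ K)
    (hA : ∀ n, MeasurableSet (A n)) {M : ℝ≥0∞} (hM : M ≠ ∞)
    (hAM : ∀ n, fracPer N s (A n) ≤ M) :
    ∃ φ : ℕ → ℕ, StrictMono φ ∧
      ∀ᵐ x, ∀ᶠ i in atTop, (x ∈ A (φ i) ↔ x ∈ liminf (A ∘ φ) atTop) := by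
  obtain ⟨φ, hφ, hcauchy⟩ := exists_subseq_volume_symmDiff_le hs hK hAK hA hM hAM
  obtain ⟨ψ, hψ, hae⟩ := exists_subseq_ae_eventually_mem_iff_mem_liminf hcauchy
  exact ⟨φ ∘ ψ, hφ.comp hψ, hae⟩

theorem measurable_fracKer_sub : Measurable fun p : X × X => fracKer N s (p.1 - p.2) := by
  unfold fracKer
  fun_prop

theorem fracPer_eq_setLIntegral_prod (E : Set X) :
    fracPer N s E = ∫⁻ p in E ×ˢ Eᶜ, fracKer N s (p.1 - p.2) ∂volume.prod volume :=
  (setLIntegral_prod _ measurable_fracKer_sub.aemeasurable).symm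

theorem aemeasurable_ofReal_comp_sub {g : X → ℝ} (hg : AEMeasurable g) :
    AEMeasurable (fun p : X × X => ENNReal.ofReal (g (p.1 - p.2))) (volume.prod volume) :=
  (hg.comp_quasiMeasurePreserving (quasiMeasurePreserving_sub _ _)).ennreal_ofReal

theorem rieszPot_eq_setLIntegral_prod {g : X → ℝ} (hg : AEMeasurable g) (E : Set X) :
    rieszPot N g E =
      ∫⁻ p in E ×ˢ E, ENNReal.ofReal (g (p.1 - p.2)) ∂volume.prod volume :=
  (setLIntegral_prod _ (aemeasurable_ofReal_comp_sub hg).restrict).symm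

theorem fracPer_add_rieszPot_le_liminf {g : X → ℝ} (hg : AEMeasurable g) {F : ℕ → Set X}
    {E : Set X} (hF : ∀ i, MeasurableSet (F i)) (hE : MeasurableSet E)
    (hFE : ∀ᵐ x, ∀ᶠ i in atTop, (x ∈ F i ↔ x ∈ E)) :
    fracPer N s E + rieszPot N g E ≤
      liminf (fun i => fracPer N s (F i) + rieszPot N g (F i)) atTop := by
  have hFEc : ∀ᵐ x, ∀ᶠ i in atTop, (x ∈ (F i)ᶜ ↔ x ∈ Eᶜ) :=
    hFE.mono fun _ hx => hx.mono fun _ => not_congr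
  have hP : fracPer N s E ≤ liminf (fun i => fracPer N s (F i)) atTop := by
    simpa only [fracPer_eq_setLIntegral_prod] using setLIntegral_prod_le_liminf
      measurable_fracKer_sub.aemeasurable hF (fun i => (hF i).compl) hE hE.compl hFE hFEc
  have hV : rieszPot N g E ≤ liminf (fun i => rieszPot N g (F i)) atTop := by
    simpa only [rieszPot_eq_setLIntegral_prod hg] using setLIntegral_prod_le_liminf
      (aemeasurable_ofReal_comp_sub hg) hF hF hE hE hFE hFE
  exact (add_le_add hP hV).trans (ENNReal.liminf_add_liminf_le _ _)

end Euclidean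

theorem exists_minimizer_in_cube_general (N : ℕ) (hN : 0 < N) (s : ℝ) (hs : s ∈ Set.Ioo (0:ℝ) 1)
    (g : EuclideanSpace ℝ (Fin N) → ℝ)
    (hgloc : LocallyIntegrable g volume)
    (m : ℝ) (hm : 0 < m) (R : ℝ) (hR : m ^ ((N : ℝ)⁻¹) ≤ R) :
    ∃ E : Set (EuclideanSpace ℝ (Fin N)),
      E ⊆ cube N R ∧ MeasurableSet E ∧ volume E = ENNReal.ofReal m ∧
      ∀ F : Set (EuclideanSpace ℝ (Fin N)),
        F ⊆ cube N R → MeasurableSet F → volume F = ENNReal.ofReal m →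
          fracPer N s E + rieszPot N g E ≤ fracPer N s F + rieszPot N g F := by
  set S := {F : Set (EuclideanSpace ℝ (Fin N)) |
    F ⊆ cube N R ∧ MeasurableSet F ∧ volume F = ENNReal.ofReal m}
  have hS : S.Nonempty := ⟨cube N (m ^ ((N : ℝ)⁻¹)), cube_mono hR, measurableSet_cube _, by
    rw [volume_cube, ← ENNReal.ofReal_pow (by positivity),
      Real.rpow_inv_natCast_pow hm.le hN.ne']⟩
  obtain ⟨E, ⟨hEc, hEm, hEv⟩, hmin⟩ := exists_isMinOn_of_forall_exists_le_liminf
      (J := fun F => fracPer N s F + rieszPot N g F) hS fun A hA M hM hAM => by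
    choose hAc hAm hAv using hA
    obtain ⟨φ, hφ, hae⟩ := exists_subseq_ae_eventually_mem_iff_of_fracPer_le hs.1
      (isBounded_cube R) hAc hAm hM fun n => le_self_add.trans (hAM n)
    have hlim := MeasurableSet.measurableSet_liminf (s := A ∘ φ) fun i => hAm (φ i)
    refine ⟨_, ⟨fun x hx => ?_, hlim, ?_⟩, φ, hφ,
      fracPer_add_rieszPot_le_liminf hgloc.aestronglyMeasurable.aemeasurable
        (fun i => hAm (φ i)) hlim hae⟩
    · obtain ⟨i, hi⟩ := (mem_liminf_iff_eventually_mem.1 hx).exists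
      exact hAc _ hi
    · refine tendsto_nhds_unique (tendsto_measure_of_ae_tendsto_indicator atTop hlim
        (fun i => hAm (φ i)) (measurableSet_cube R) (by simp [volume_cube])
        (.of_forall fun i => hAc (φ i)) hae) ?_
      simp [hAv]
  exact ⟨E, hEc, hEm, hEv, fun F hFc hFm hFv => hmin ⟨hFc, hFm, hFv⟩⟩

/-- for `g ≥ 0` locally integrable, `m > 0`, and `R ≥ m^{1/N}`, the problem
`inf { P_s(E) + V_g(E) : E ⊆ Q_R, |E| = m }` admits a minimizer. -/
theorem exists_minimizer_in_cube (N : ℕ) (hN : 0 < N) (s : ℝ) (hs : s ∈ Set.Ioo (0:ℝ) 1)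
    (g : EuclideanSpace ℝ (Fin N) → ℝ)
    (hg0 : ∀ x : EuclideanSpace ℝ (Fin N), x ≠ 0 → 0 ≤ g x)
    (hgloc : LocallyIntegrable g volume)
    (m : ℝ) (hm : 0 < m) (R : ℝ) (hR : m ^ ((N : ℝ)⁻¹) ≤ R) :
    ∃ E : Set (EuclideanSpace ℝ (Fin N)),
      E ⊆ cube N R ∧ MeasurableSet E ∧ volume E = ENNReal.ofReal m ∧
      ∀ F : Set (EuclideanSpace ℝ (Fin N)),
        F ⊆ cube N R → MeasurableSet F → volume F = ENNReal.ofReal m →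
          fracPer N s E + rieszPot N g E ≤ fracPer N s F + rieszPot N g F :=
  exists_minimizer_in_cube_general N hN s hs g hgloc m hm R hR
end

section
/- Let s ∈ (0,1), m > 0, and g: ℝ^N\{0} → ℝ be nonnegative, radially non-increasing, symmetric, and integrable on ℝ^N. If E is a minimizer of ℰ_{s,g} = P_s + V_g among sets of volume m, then E satisfies the almost-minimality (Λ-minimality) property: P_s(E) ≤ P_s(F) + (2‖g‖_{L^1(ℝ^N)} + μ₀)|E Δ F| for every bounded measurable F ⊆ ℝ^N, where μ₀ is the penalization constant from the reduction to the unconstrained problem. -/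
/-!
Let `C` be the energy of a ball of volume `m`. It is finite: for the unit ball `B`,
`P_s(B) = ∫ |h|^{-N-s} |B \ (h + B)| dh` with `|B \ (h + B)| ≤ N |h| |B|`, which is integrable at
`0` since `s < 1` and at infinity since `s > 0`. Given `F` with `|F| = m' ≠ m`, the dilate `λF`
with `λ^N = m / m'` is admissible, and `P_s(λF) = λ^{N-s} P_s(F)`,
`V_g(λF) = λ^{2N} ∫_F ∫_F g(λ(x - y))`. If `m' < m` then `λ ≥ 1`, `g(λz) ≤ g(z)` and
`ℰ(λF) ≤ (m/m')² ℰ(F)`; this costs at most `8C(m - m')/m` when `m' > m/2` and `ℰ(F) < ℰ(E) ≤ C`,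
while for `m' ≤ m/2` simply `ℰ(E) ≤ C ≤ μ₀(m - m')`. If `m' > m` then `λ < 1`, `P_s` decreases,
and since `∫ (g(λz) - g(z)) dz = (λ^{-N} - 1)‖g‖₁` the term `V_g` grows by at most
`‖g‖₁ (m' - m)`. Hence `μ₀ = ‖g‖₁ + 8C/m + 1` works. The second inequality follows from the
first, because `V_g(F) ≤ V_g(E) + 2‖g‖₁ |F \ E|` and `||F| - |E|| ≤ |E Δ F|`.
-/

open MeasureTheory ENNReal Set

/-- The penalization term `μ · ||F| − m|`, as an element of `[0,∞]`. -/
noncomputable def penalty (N : ℕ) (μ m : ℝ) (F : Set (EuclideanSpace ℝ (Fin N))) : ℝ≥0∞ :=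
  ENNReal.ofReal μ * ((volume F - ENNReal.ofReal m) + (ENNReal.ofReal m - volume F))

open Module
open scoped Pointwise

theorem sq_div_sub_one_le {m m' : ℝ} (hm' : m / 2 < m') (hlt : m' < m) :
    (m / m') ^ 2 - 1 ≤ 8 * (m - m') / m := by
  have hm'₀ : 0 < m' := by linarith
  rw [div_pow, div_sub_one (by positivity), div_le_div_iff₀ (by positivity) (by linarith)]
  have h : (m + m') * m ≤ 8 * m' ^ 2 := by nlinarith
  nlinarith [mul_le_mul_of_nonneg_left h (sub_nonneg.2 hlt.le)]

theorem rpow_neg_le_two_rpow_mul_one_add_rpow_neg {t p : ℝ} (ht : 1 ≤ t) (hp : 0 ≤ p) :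
    t ^ (-p) ≤ 2 ^ p * (1 + t) ^ (-p) := by
  calc t ^ (-p) = 2 ^ p * (2 * t) ^ (-p) := by
        rw [Real.mul_rpow zero_le_two (by linarith), Real.rpow_neg zero_le_two, ← mul_assoc,
          mul_inv_cancel₀ (by positivity), one_mul]
    _ ≤ 2 ^ p * (1 + t) ^ (-p) :=
        mul_le_mul_of_nonneg_left
          (Real.rpow_le_rpow_of_nonpos (by linarith) (by linarith) (by linarith)) (by positivity)

theorem ofReal_abs_pow_mul_ofReal_abs_inv {c : ℝ} (hc : c ≠ 0) (n : ℕ) :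
    ENNReal.ofReal |c ^ n| * ENNReal.ofReal |(c ^ n)⁻¹| = 1 := by
  rw [← ENNReal.ofReal_mul (abs_nonneg _), ← abs_mul, mul_inv_cancel₀ (pow_ne_zero n hc),
    abs_one, ENNReal.ofReal_one]

theorem ofReal_tsub_add_tsub_eq_abs {x y : ℝ} (hx : 0 ≤ x) (hy : 0 ≤ y) :
    (ENNReal.ofReal x - ENNReal.ofReal y) + (ENNReal.ofReal y - ENNReal.ofReal x)
      = ENNReal.ofReal |x - y| := by
  rw [← ENNReal.ofReal_sub _ hy, ← ENNReal.ofReal_sub _ hx]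
  rcases le_total x y with h | h
  · rw [ENNReal.ofReal_of_nonpos (sub_nonpos.2 h), zero_add, abs_sub_comm,
      abs_of_nonneg (sub_nonneg.2 h)]
  · rw [ENNReal.ofReal_of_nonpos (sub_nonpos.2 h), add_zero, abs_of_nonneg (sub_nonneg.2 h)]

theorem le_add_ofReal_of_le_ofReal_mul {x y : ℝ≥0∞} {Q C : ℝ} (hQ : 1 ≤ Q)
    (hxy : x ≤ ENNReal.ofReal Q * y) (hxC : x ≤ ENNReal.ofReal C) :
    x ≤ y + ENNReal.ofReal ((Q - 1) * C) := by
  rcases le_total x y with hle | hyx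
  · exact hle.trans le_self_add
  calc x ≤ ENNReal.ofReal Q * y := hxy
    _ = y + ENNReal.ofReal (Q - 1) * y := by
        conv_lhs => rw [← add_sub_cancel (1 : ℝ) Q, ENNReal.ofReal_add zero_le_one (by linarith),
          ENNReal.ofReal_one, add_mul, one_mul]
    _ ≤ y + ENNReal.ofReal (Q - 1) * ENNReal.ofReal C := by
        gcongr
        exact hyx.trans hxC
    _ = y + ENNReal.ofReal ((Q - 1) * C) := by
        rw [ENNReal.ofReal_mul (by linarith)]

theorem tsub_add_tsub_le_measure_symmDiff {X : Type*} [MeasurableSpace X] (ν : Measure X)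
    (E F : Set X) : (ν F - ν E) + (ν E - ν F) ≤ ν (symmDiff E F) := by
  rcases le_total (ν E) (ν F) with h | h
  · rw [tsub_eq_zero_of_le h, add_zero]
    exact le_measure_sdiff.trans (measure_mono (by rw [symmDiff_def]; exact subset_union_right))
  · rw [tsub_eq_zero_of_le h, zero_add]
    exact le_measure_sdiff.trans (measure_mono (by rw [symmDiff_def]; exact subset_union_left))

section Interaction

variable {V : Type*} [MeasurableSpace V] [Sub V] {μ : Measure V} {k : V → ℝ≥0∞}

noncomputable def interaction (μ : Measure V) (k : V → ℝ≥0∞) (A B : Set V) : ℝ≥0∞ :=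
  ∫⁻ x in A, ∫⁻ y in B, k (x - y) ∂μ ∂μ

theorem interaction_mono {A A' B B' : Set V} (hA : A ⊆ A') (hB : B ⊆ B') :
    interaction μ k A B ≤ interaction μ k A' B' :=
  lintegral_mono' (Measure.restrict_mono hA le_rfl) fun _ =>
    lintegral_mono' (Measure.restrict_mono hB le_rfl) le_rfl

theorem interaction_union_left_le (A₁ A₂ B : Set V) :
    interaction μ k (A₁ ∪ A₂) B ≤ interaction μ k A₁ B + interaction μ k A₂ B :=
  lintegral_union_le _ _ _

theorem interaction_const_mul {r : ℝ≥0∞} (hr : r ≠ ∞) (A B : Set V) :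
    interaction μ (fun z => r * k z) A B = r * interaction μ k A B := by
  simp_rw [interaction, lintegral_const_mul' r _ hr]

end Interaction

section HaarInteraction

variable {V : Type*} [NormedAddCommGroup V] [NormedSpace ℝ V] [MeasurableSpace V] [BorelSpace V]
  [FiniteDimensional ℝ V] {μ : Measure V} [μ.IsAddHaarMeasure] {k k' : V → ℝ≥0∞} {A B : Set V}

theorem interaction_mono_kernel (h : k ≤ᵐ[μ] k') (A B : Set V) :
    interaction μ k A B ≤ interaction μ k' A B :=
  lintegral_mono fun x => lintegral_mono_ae <| ae_restrict_of_ae <|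
    (Measure.measurePreserving_sub_left μ x).quasiMeasurePreserving.ae h

theorem aemeasurable_interaction_integrand (hk : AEMeasurable k μ) (A B : Set V) :
    AEMeasurable (fun p : V × V => k (p.1 - p.2)) ((μ.restrict A).prod (μ.restrict B)) := by
  rw [Measure.prod_restrict]
  exact (hk.comp_quasiMeasurePreserving (quasiMeasurePreserving_sub μ μ)).restrict

theorem interaction_le_lintegral_mul_measure_left (A B : Set V) :
    interaction μ k A B ≤ (∫⁻ z, k z ∂μ) * μ A :=
  calc interaction μ k A B ≤ ∫⁻ _ in A, ∫⁻ z, k z ∂μ ∂μ :=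
        lintegral_mono fun x => (setLIntegral_le_lintegral _ _).trans_eq
          (lintegral_sub_left_eq_self k x)
    _ = (∫⁻ z, k z ∂μ) * μ A := setLIntegral_const _ _

theorem interaction_le_lintegral_mul_measure_right (hk : AEMeasurable k μ) (A B : Set V) :
    interaction μ k A B ≤ (∫⁻ z, k z ∂μ) * μ B :=
  calc interaction μ k A B = ∫⁻ y in B, ∫⁻ x in A, k (x - y) ∂μ ∂μ :=
        lintegral_lintegral_swap (aemeasurable_interaction_integrand hk A B)
    _ ≤ ∫⁻ _ in B, ∫⁻ z, k z ∂μ ∂μ :=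
        lintegral_mono fun y => (setLIntegral_le_lintegral _ _).trans_eq
          (lintegral_sub_right_eq_self k y)
    _ = (∫⁻ z, k z ∂μ) * μ B := setLIntegral_const _ _

theorem interaction_union_right_le (hk : AEMeasurable k μ) (A B₁ B₂ : Set V) :
    interaction μ k A (B₁ ∪ B₂) ≤ interaction μ k A B₁ + interaction μ k A B₂ :=
  calc interaction μ k A (B₁ ∪ B₂)
      ≤ ∫⁻ x in A, (∫⁻ y in B₁, k (x - y) ∂μ) + ∫⁻ y in B₂, k (x - y) ∂μ ∂μ :=
        lintegral_mono fun _ => lintegral_union_le _ _ _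
    _ = interaction μ k A B₁ + interaction μ k A B₂ :=
        lintegral_add_left' (aemeasurable_interaction_integrand hk A B₁).lintegral_prod_right' _

theorem interaction_add_kernel (hk : AEMeasurable k μ) (A B : Set V) :
    interaction μ (fun z => k z + k' z) A B = interaction μ k A B + interaction μ k' A B := by
  have hinner (x : V) : ∫⁻ y in B, k (x - y) + k' (x - y) ∂μ
      = (∫⁻ y in B, k (x - y) ∂μ) + ∫⁻ y in B, k' (x - y) ∂μ :=
    lintegral_add_left' ((hk.comp_quasiMeasurePreserving
      (Measure.measurePreserving_sub_left μ x).quasiMeasurePreserving).restrict) _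
  simp_rw [interaction, hinner]
  exact lintegral_add_left' (aemeasurable_interaction_integrand hk A B).lintegral_prod_right' _

theorem interaction_self_le_add_measure_sdiff (hk : AEMeasurable k μ) (A B : Set V) :
    interaction μ k B B ≤ interaction μ k A A + 2 * (∫⁻ z, k z ∂μ) * μ (B \ A) := by
  set D := B \ A
  calc interaction μ k B B ≤ interaction μ k (A ∪ D) (A ∪ D) :=
        interaction_mono (by simp [D]) (by simp [D])
    _ ≤ (interaction μ k A A + interaction μ k A D) + interaction μ k D (A ∪ D) :=
        (interaction_union_left_le _ _ _).trans
          (add_le_add_left (interaction_union_right_le hk _ _ _) _)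
    _ ≤ (interaction μ k A A + (∫⁻ z, k z ∂μ) * μ D) + (∫⁻ z, k z ∂μ) * μ D :=
        add_le_add (add_le_add le_rfl (interaction_le_lintegral_mul_measure_right hk _ _))
          (interaction_le_lintegral_mul_measure_left _ _)
    _ = interaction μ k A A + 2 * (∫⁻ z, k z ∂μ) * μ D := by ring

theorem setLIntegral_comp_smul {c : ℝ} (hc : c ≠ 0) (f : V → ℝ≥0∞) (A : Set V) :
    ∫⁻ x in A, f (c • x) ∂μ = ENNReal.ofReal |(c ^ finrank ℝ V)⁻¹| * ∫⁻ y in c • A, f y ∂μ := by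
  let e := (Homeomorph.smul (Units.mk0 c hc) : V ≃ₜ V).toMeasurableEquiv
  have hpre : e ⁻¹' (c • A) = A := by
    ext x; exact smul_mem_smul_set_iff₀ hc A x
  calc ∫⁻ x in A, f (c • x) ∂μ = ∫⁻ y, f y ∂(μ.restrict (e ⁻¹' (c • A))).map e := by
        rw [hpre, lintegral_map_equiv]; rfl
    _ = ∫⁻ y in c • A, f y ∂(μ.map (c • ·)) := by
        rw [← e.restrict_map]; rfl
    _ = _ := by
        rw [Measure.map_addHaar_smul μ hc, Measure.restrict_smul, lintegral_smul_measure,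
          smul_eq_mul]

theorem lintegral_comp_smul {c : ℝ} (hc : c ≠ 0) (f : V → ℝ≥0∞) :
    ∫⁻ x, f (c • x) ∂μ = ENNReal.ofReal |(c ^ finrank ℝ V)⁻¹| * ∫⁻ y, f y ∂μ := by
  simpa [smul_set_univ₀ hc] using setLIntegral_comp_smul (μ := μ) hc f univ

theorem interaction_smul_set {c : ℝ} (hc : c ≠ 0) (k : V → ℝ≥0∞) (A B : Set V) :
    interaction μ k (c • A) (c • B)
      = ENNReal.ofReal |c ^ finrank ℝ V| ^ 2 * interaction μ (fun z => k (c • z)) A B := by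
  have hcomp : interaction μ (fun z => k (c • z)) A B
      = ENNReal.ofReal |(c ^ finrank ℝ V)⁻¹| ^ 2 * interaction μ k (c • A) (c • B) := by
    have hinner (x : V) : ∫⁻ y in B, k (c • x - c • y) ∂μ
        = ENNReal.ofReal |(c ^ finrank ℝ V)⁻¹| * ∫⁻ y in c • B, k (c • x - y) ∂μ :=
      setLIntegral_comp_smul hc (fun y => k (c • x - y)) B
    simp_rw [interaction, smul_sub, hinner, lintegral_const_mul' _ _ ofReal_ne_top]
    rw [setLIntegral_comp_smul hc (fun x => ∫⁻ y in c • B, k (x - y) ∂μ), ← mul_assoc, sq]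
  rw [hcomp, ← mul_assoc, ← mul_pow, ofReal_abs_pow_mul_ofReal_abs_inv hc, one_pow, one_mul]

theorem interaction_smul_set_le_of_one_le {c : ℝ} (hc : 1 ≤ c) (hk : ∀ᵐ z ∂μ, k (c • z) ≤ k z)
    (A B : Set V) :
    interaction μ k (c • A) (c • B)
      ≤ ENNReal.ofReal (c ^ finrank ℝ V) ^ 2 * interaction μ k A B := by
  rw [interaction_smul_set (by positivity), abs_of_nonneg (by positivity)]
  gcongr
  exact interaction_mono_kernel hk A B

theorem interaction_comp_smul_le {c : ℝ} (hc : 0 < c) (hk : AEMeasurable k μ)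
    (hmono : ∀ᵐ z ∂μ, k z ≤ k (c • z)) (hfin : ∫⁻ z, k z ∂μ ≠ ∞) (A B : Set V) :
    interaction μ (fun z => k (c • z)) A B
      ≤ interaction μ k A B
        + ENNReal.ofReal ((c ^ finrank ℝ V)⁻¹ - 1) * (∫⁻ z, k z ∂μ) * μ A := by
  have hgain : ∫⁻ z, (k (c • z) - k z) ∂μ
      = ENNReal.ofReal ((c ^ finrank ℝ V)⁻¹ - 1) * ∫⁻ z, k z ∂μ := by
    rw [lintegral_sub' hk hfin hmono, lintegral_comp_smul hc.ne', abs_of_pos (by positivity),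
      ENNReal.ofReal_sub _ zero_le_one, ENNReal.ofReal_one, ENNReal.sub_mul fun _ _ => hfin,
      one_mul]
  calc interaction μ (fun z => k (c • z)) A B
      ≤ interaction μ (fun z => k z + (k (c • z) - k z)) A B :=
        interaction_mono_kernel (ae_of_all _ fun _ => le_add_tsub) A B
    _ = interaction μ k A B + interaction μ (fun z => k (c • z) - k z) A B :=
        interaction_add_kernel hk A B
    _ ≤ _ := by
        rw [← hgain]
        exact add_le_add le_rfl (interaction_le_lintegral_mul_measure_left A B)

theorem interaction_smul_set_le_of_le_one {c : ℝ} (hc₀ : 0 < c) (hc₁ : c ≤ 1)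
    (hk : AEMeasurable k μ) (hmono : ∀ᵐ z ∂μ, k z ≤ k (c • z)) (hfin : ∫⁻ z, k z ∂μ ≠ ∞)
    (A B : Set V) :
    interaction μ k (c • A) (c • B)
      ≤ interaction μ k A B + ENNReal.ofReal (1 - c ^ finrank ℝ V) * (∫⁻ z, k z ∂μ) * μ A := by
  set T := c ^ finrank ℝ V
  have hT₀ : 0 < T := by positivity
  have hcoef : ENNReal.ofReal T ^ 2 * ENNReal.ofReal (T⁻¹ - 1) ≤ ENNReal.ofReal (1 - T) := by
    rw [← ENNReal.ofReal_pow hT₀.le, ← ENNReal.ofReal_mul (by positivity)]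
    refine ENNReal.ofReal_le_ofReal ?_
    have hT : T ^ 2 * (T⁻¹ - 1) = T - T ^ 2 := by field_simp
    nlinarith [sq_nonneg (1 - T)]
  have hsq : ENNReal.ofReal T ^ 2 ≤ 1 :=
    pow_le_one₀ zero_le (ENNReal.ofReal_le_one.2 (pow_le_one₀ hc₀.le hc₁))
  calc interaction μ k (c • A) (c • B)
      = ENNReal.ofReal T ^ 2 * interaction μ (fun z => k (c • z)) A B := by
        rw [interaction_smul_set hc₀.ne', abs_of_pos hT₀]
    _ ≤ ENNReal.ofReal T ^ 2
          * (interaction μ k A B + ENNReal.ofReal (T⁻¹ - 1) * (∫⁻ z, k z ∂μ) * μ A) := by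
        gcongr
        exact interaction_comp_smul_le hc₀ hk hmono hfin A B
    _ = ENNReal.ofReal T ^ 2 * interaction μ k A B
        + ENNReal.ofReal T ^ 2 * ENNReal.ofReal (T⁻¹ - 1) * (∫⁻ z, k z ∂μ) * μ A := by
        ring
    _ ≤ 1 * interaction μ k A B + ENNReal.ofReal (1 - T) * (∫⁻ z, k z ∂μ) * μ A := by
        gcongr
    _ = interaction μ k A B + ENNReal.ofReal (1 - T) * (∫⁻ z, k z ∂μ) * μ A := by
        rw [one_mul]

theorem interaction_eq_lintegral_mul_measure_inter_vadd (hk : Measurable k)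
    (hB : MeasurableSet B) :
    interaction μ k A B = ∫⁻ h, k h * μ (A ∩ (h +ᵥ B)) ∂μ := by
  set S : Set (V × V) := {p | p.1 - p.2 ∈ B}
  have hS : MeasurableSet S := hB.preimage (measurable_fst.sub measurable_snd)
  have hinner (x : V) :
      ∫⁻ y in B, k (x - y) ∂μ = ∫⁻ h, S.indicator (fun p => k p.2) (x, h) ∂μ := by
    rw [← lintegral_indicator hB, ← lintegral_sub_left_eq_self _ x]
    congr 1 with h
    simp [S, indicator]
  have hslice (h : V) :
      ∫⁻ x in A, S.indicator (fun p => k p.2) (x, h) ∂μ = k h * μ (A ∩ (h +ᵥ B)) := by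
    have hset : {x | (x, h) ∈ S} = h +ᵥ B := by
      ext x; simp [S, mem_vadd_set_iff_neg_vadd_mem, neg_add_eq_sub]
    have hind : (fun x => S.indicator (fun p => k p.2) (x, h))
        = (h +ᵥ B).indicator fun _ => k h := by
      ext x; rw [← hset]; simp [indicator]
    rw [hind, lintegral_indicator_const (hB.const_vadd h), Measure.restrict_apply
      (hB.const_vadd h), inter_comm]
  simp_rw [interaction, hinner]
  rw [lintegral_lintegral_swap (f := fun x h => S.indicator (fun p => k p.2) (x, h))
    ((hk.comp measurable_snd).indicator hS :).aemeasurable]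
  simp_rw [hslice]

theorem measure_ball_diff_ball_le [Nontrivial V] (h : V) :
    μ (Metric.ball 0 1 \ Metric.ball h 1)
      ≤ ENNReal.ofReal (finrank ℝ V * ‖h‖) * μ (Metric.ball 0 1) := by
  have hd : (1 : ℝ) ≤ finrank ℝ V := by exact_mod_cast finrank_pos
  rcases le_or_gt 1 ‖h‖ with hh | hh
  · calc μ (Metric.ball 0 1 \ Metric.ball h 1) ≤ 1 * μ (Metric.ball 0 1) := by
          rw [one_mul]; exact measure_mono sdiff_subset
      _ ≤ _ := by
          gcongr
          exact ENNReal.one_le_ofReal.2 (by nlinarith)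
  have hsub : Metric.ball (0 : V) (1 - ‖h‖) ⊆ Metric.ball h 1 := fun x hx => by
    rw [mem_ball_zero_iff] at hx
    rw [Metric.mem_ball, dist_eq_norm]
    linarith [norm_sub_le x h]
  have hbern : 1 ≤ (1 - ‖h‖) ^ finrank ℝ V + finrank ℝ V * ‖h‖ := by
    have := one_add_mul_le_pow (a := -‖h‖) (by linarith [norm_nonneg h]) (finrank ℝ V)
    rw [← sub_eq_add_neg] at this
    linarith
  calc μ (Metric.ball 0 1 \ Metric.ball h 1)
      ≤ μ (Metric.ball 0 1 \ Metric.ball 0 (1 - ‖h‖)) :=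
        measure_mono (sdiff_subset_sdiff_right hsub)
    _ ≤ ENNReal.ofReal (finrank ℝ V * ‖h‖) * μ (Metric.ball 0 1) := by
        rw [measure_sdiff_le_iff_le_add measurableSet_ball.nullMeasurableSet
          (Metric.ball_subset_ball (by linarith [norm_nonneg h])) measure_ball_lt_top.ne,
          μ.addHaar_ball (0 : V) (r := 1 - ‖h‖) (by linarith), ← add_mul,
          ← ENNReal.ofReal_add (by positivity) (by positivity)]
        calc μ (Metric.ball 0 1) = ENNReal.ofReal 1 * μ (Metric.ball 0 1) := by simp
          _ ≤ _ := by gcongr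

end HaarInteraction

section Penalization

variable {X : Type*} [MeasurableSpace X] {ν : Measure X} {ℰ : Set X → ℝ≥0∞}

theorem le_add_ofReal_mul_abs_of_rescaling {m a C μ : ℝ} (hm : 0 < m) (hC : 0 ≤ C)
    (haμ : a ≤ μ) (hCμ : 8 * C ≤ μ * m) {E F : Set X} (hEC : ℰ E ≤ ENNReal.ofReal C)
    (hmin : ∀ G, MeasurableSet G → ν G = ENNReal.ofReal m → ℰ E ≤ ℰ G)
    (hF : MeasurableSet F) {m' : ℝ} (hvol : ν F = ENNReal.ofReal m')
    (hup : 0 < m' → m' < m → ∃ G, MeasurableSet G ∧ ν G = ENNReal.ofReal m ∧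
      ℰ G ≤ ENNReal.ofReal ((m / m') ^ 2) * ℰ F)
    (hdown : m < m' → ∃ G, MeasurableSet G ∧ ν G = ENNReal.ofReal m ∧
      ℰ G ≤ ℰ F + ENNReal.ofReal (a * (m' - m))) :
    ℰ E ≤ ℰ F + ENNReal.ofReal (μ * |m' - m|) := by
  rcases lt_trichotomy m' m with hlt | rfl | hgt
  · rw [abs_of_neg (by linarith), neg_sub]
    by_cases hsmall : m' ≤ m / 2
    · calc ℰ E ≤ ENNReal.ofReal C := hEC
        _ ≤ ENNReal.ofReal (μ * (m - m')) := ENNReal.ofReal_le_ofReal (by nlinarith)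
        _ ≤ ℰ F + ENNReal.ofReal (μ * (m - m')) := le_add_self
    obtain ⟨G, hG, hGvol, hGF⟩ := hup (by linarith) hlt
    have hreal : ((m / m') ^ 2 - 1) * C ≤ μ * (m - m') :=
      calc ((m / m') ^ 2 - 1) * C ≤ 8 * (m - m') / m * C :=
            mul_le_mul_of_nonneg_right (sq_div_sub_one_le (by linarith) hlt) hC
        _ = 8 * C / m * (m - m') := by ring
        _ ≤ μ * (m - m') :=
            mul_le_mul_of_nonneg_right ((div_le_iff₀ hm).2 hCμ) (by linarith)
    calc ℰ E ≤ ℰ F + ENNReal.ofReal (((m / m') ^ 2 - 1) * C) :=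
          le_add_ofReal_of_le_ofReal_mul (one_le_pow₀ ((one_le_div (by linarith)).2 hlt.le))
            ((hmin G hG hGvol).trans hGF) hEC
      _ ≤ ℰ F + ENNReal.ofReal (μ * (m - m')) := by gcongr
  · simpa using hmin F hF hvol
  · obtain ⟨G, hG, hGvol, hGF⟩ := hdown hgt
    rw [abs_of_pos (by linarith)]
    calc ℰ E ≤ ℰ G := hmin G hG hGvol
      _ ≤ ℰ F + ENNReal.ofReal (a * (m' - m)) := hGF
      _ ≤ ℰ F + ENNReal.ofReal (μ * (m' - m)) := by gcongr

end Penalization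

section Euclidean

variable {N : ℕ} {s : ℝ}

theorem fracPer_eq_interaction (E : Set (EuclideanSpace ℝ (Fin N))) :
    fracPer N s E = interaction volume (fracKer N s) E Eᶜ := rfl

theorem rieszPot_eq_interaction (g : EuclideanSpace ℝ (Fin N) → ℝ)
    (E : Set (EuclideanSpace ℝ (Fin N))) :
    rieszPot N g E = interaction volume (fun z => ENNReal.ofReal (g z)) E E := rfl

theorem measurable_fracKer : Measurable (fracKer N s) := by
  unfold fracKer; fun_prop

theorem fracKer_smul {c : ℝ} (hc : 0 < c) (z : EuclideanSpace ℝ (Fin N)) :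
    fracKer N s (c • z) = ENNReal.ofReal (c ^ (-((N : ℝ) + s))) * fracKer N s z := by
  rw [fracKer, fracKer, ← ENNReal.ofReal_mul (by positivity), norm_smul, Real.norm_eq_abs,
    abs_of_pos hc, Real.mul_rpow hc.le (norm_nonneg z)]

theorem fracPer_smul {c : ℝ} (hc : 0 < c) (E : Set (EuclideanSpace ℝ (Fin N))) :
    fracPer N s (c • E) = ENNReal.ofReal (c ^ ((N : ℝ) - s)) * fracPer N s E := by
  have hcompl : (c • E)ᶜ = c • Eᶜ := by
    rw [← preimage_smul_inv₀ hc.ne', ← preimage_smul_inv₀ hc.ne', preimage_compl]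
  rw [fracPer_eq_interaction, hcompl, interaction_smul_set hc.ne', finrank_euclideanSpace_fin,
    abs_of_pos (by positivity)]
  simp_rw [fracKer_smul hc]
  rw [interaction_const_mul ofReal_ne_top, ← mul_assoc, ← ENNReal.ofReal_pow (by positivity),
    ← ENNReal.ofReal_mul (by positivity), fracPer_eq_interaction]
  congr 2
  rw [← Real.rpow_natCast, ← Real.rpow_natCast, ← Real.rpow_mul hc.le, ← Real.rpow_add hc]
  congr 1
  push_cast
  ring

theorem nontrivial_euclideanSpace (hN : 0 < N) : Nontrivial (EuclideanSpace ℝ (Fin N)) :=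
  Module.nontrivial_of_finrank_pos (R := ℝ) (by simpa using hN)

theorem fracPer_ball_eq_lintegral :
    fracPer N s (Metric.ball 0 1)
      = ∫⁻ h, fracKer N s h * volume (Metric.ball 0 1 \ Metric.ball h 1) := by
  have hshell (h : EuclideanSpace ℝ (Fin N)) :
      Metric.ball 0 1 ∩ (h +ᵥ (Metric.ball (0 : EuclideanSpace ℝ (Fin N)) 1)ᶜ)
        = Metric.ball 0 1 \ Metric.ball h 1 := by
    rw [vadd_set_compl, Metric.vadd_ball, vadd_eq_add, add_zero, sdiff_eq]
  rw [fracPer_eq_interaction, interaction_eq_lintegral_mul_measure_inter_vadd measurable_fracKer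
    measurableSet_ball.compl]
  simp_rw [hshell]

theorem fracPer_ball_lt_top (hN : 0 < N) (hs₀ : 0 < s) (hs₁ : s < 1) :
    fracPer N s (Metric.ball 0 1) < ∞ := by
  have := nontrivial_euclideanSpace hN
  have hN₁ : (1 : ℝ) ≤ N := by exact_mod_cast hN
  rw [fracPer_ball_eq_lintegral, ← lintegral_add_compl _ (measurableSet_ball (x := 0) (ε := 1))]
  set β := (volume (Metric.ball (0 : EuclideanSpace ℝ (Fin N)) 1)).toReal
  have hβ : volume (Metric.ball (0 : EuclideanSpace ℝ (Fin N)) 1) = ENNReal.ofReal β :=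
    (ofReal_toReal measure_ball_lt_top.ne).symm
  refine ENNReal.add_lt_top.2 ⟨?_, ?_⟩
  · have hnear (x : EuclideanSpace ℝ (Fin N)) :
        fracKer N s x * volume (Metric.ball 0 1 \ Metric.ball x 1)
          ≤ ENNReal.ofReal (N * β * ‖x‖ ^ (-((N : ℝ) + s - 1))) := by
      grw [measure_ball_diff_ball_le, finrank_euclideanSpace_fin, hβ, fracKer,
        ← ENNReal.ofReal_mul (by positivity), ← ENNReal.ofReal_mul (by positivity)]
      refine ENNReal.ofReal_le_ofReal (le_of_eq ?_)
      rcases eq_or_ne ‖x‖ 0 with hx | hx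
      · simp only [hx, mul_zero, zero_mul]
        rw [Real.zero_rpow (by linarith), mul_zero]
      · rw [show -((N : ℝ) + s - 1) = -((N : ℝ) + s) + 1 by ring, Real.rpow_add_one hx]
        ring
    refine (lintegral_mono hnear).trans_lt (Integrable.lintegral_lt_top ?_)
    refine integrableOn_ball_of_norm_le_rpow (C := N * β) (α := N + s - 1)
      (by rw [finrank_euclideanSpace_fin]; exact hN) (by rw [finrank_euclideanSpace_fin]; linarith)
      (ae_of_all _ fun x => ?_)
      (Measurable.aestronglyMeasurable (by fun_prop))
    rw [Real.norm_of_nonneg (by positivity)]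
  · have hfar : ∀ x ∈ (Metric.ball (0 : EuclideanSpace ℝ (Fin N)) 1)ᶜ,
        fracKer N s x * volume (Metric.ball 0 1 \ Metric.ball x 1)
          ≤ ENNReal.ofReal (2 ^ ((N : ℝ) + s)) * ENNReal.ofReal ((1 + ‖x‖) ^ (-((N : ℝ) + s)))
            * ENNReal.ofReal β := by
      intro x hx
      rw [mem_compl_iff, mem_ball_zero_iff, not_lt] at hx
      rw [← hβ, fracKer, ← ENNReal.ofReal_mul (by positivity)]
      gcongr
      · exact rpow_neg_le_two_rpow_mul_one_add_rpow_neg hx (by positivity)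
      · exact sdiff_subset
    refine (setLIntegral_mono' measurableSet_ball.compl hfar).trans_lt <|
      (setLIntegral_le_lintegral _ _).trans_lt ?_
    rw [lintegral_mul_const' _ _ ofReal_ne_top, lintegral_const_mul' _ _ ofReal_ne_top]
    exact ENNReal.mul_lt_top (ENNReal.mul_lt_top ofReal_lt_top
      (finite_integral_one_add_norm (by rw [finrank_euclideanSpace_fin]; linarith))) ofReal_lt_top

theorem volume_rpow_inv_smul (hN : 0 < N) {t : ℝ} (ht : 0 ≤ t)
    (F : Set (EuclideanSpace ℝ (Fin N))) :
    volume ((t ^ (N⁻¹ : ℝ)) • F) = ENNReal.ofReal t * volume F := by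
  rw [Measure.addHaar_smul_of_nonneg _ (by positivity), finrank_euclideanSpace_fin,
    Real.rpow_inv_natCast_pow ht hN.ne']

end Euclidean

noncomputable def energy (N : ℕ) (s : ℝ) (g : EuclideanSpace ℝ (Fin N) → ℝ)
    (E : Set (EuclideanSpace ℝ (Fin N))) : ℝ≥0∞ :=
  fracPer N s E + rieszPot N g E

section Energy

variable {N : ℕ} {s : ℝ} {g : EuclideanSpace ℝ (Fin N) → ℝ}

theorem ae_comp_smul_le_of_one_le (hN : 0 < N)
    (hgmono : ∀ x : EuclideanSpace ℝ (Fin N), x ≠ 0 → ∀ l : ℝ, 1 ≤ l → g (l • x) ≤ g x)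
    {c : ℝ} (hc : 1 ≤ c) :
    ∀ᵐ z ∂volume, ENNReal.ofReal (g (c • z)) ≤ ENNReal.ofReal (g z) := by
  have := nontrivial_euclideanSpace hN
  filter_upwards [Measure.ae_ne volume 0] with z hz
  exact ENNReal.ofReal_le_ofReal (hgmono z hz c hc)

theorem ae_le_comp_smul_of_le_one (hN : 0 < N)
    (hgmono : ∀ x : EuclideanSpace ℝ (Fin N), x ≠ 0 → ∀ l : ℝ, 1 ≤ l → g (l • x) ≤ g x)
    {c : ℝ} (hc₀ : 0 < c) (hc₁ : c ≤ 1) :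
    ∀ᵐ z ∂volume, ENNReal.ofReal (g z) ≤ ENNReal.ofReal (g (c • z)) := by
  have := nontrivial_euclideanSpace hN
  filter_upwards [Measure.ae_ne volume 0] with z hz
  have := hgmono (c • z) (smul_ne_zero hc₀.ne' hz) c⁻¹ (one_le_inv₀ hc₀ |>.2 hc₁)
  rw [inv_smul_smul₀ hc₀.ne'] at this
  exact ENNReal.ofReal_le_ofReal this

theorem energy_smul_le_of_one_le (hN : 0 < N) (hs : 0 ≤ s)
    (hgmono : ∀ x : EuclideanSpace ℝ (Fin N), x ≠ 0 → ∀ l : ℝ, 1 ≤ l → g (l • x) ≤ g x)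
    {c : ℝ} (hc : 1 ≤ c) (F : Set (EuclideanSpace ℝ (Fin N))) :
    energy N s g (c • F) ≤ ENNReal.ofReal (c ^ N) ^ 2 * energy N s g F := by
  have hP : ENNReal.ofReal (c ^ ((N : ℝ) - s)) ≤ ENNReal.ofReal (c ^ N) ^ 2 := by
    rw [← ENNReal.ofReal_pow (by positivity), ← pow_mul, ← Real.rpow_natCast]
    exact ENNReal.ofReal_le_ofReal (Real.rpow_le_rpow_of_exponent_le hc (by push_cast; linarith))
  have hV := interaction_smul_set_le_of_one_le hc (ae_comp_smul_le_of_one_le hN hgmono hc) F F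
  rw [finrank_euclideanSpace_fin] at hV
  rw [energy, energy, fracPer_smul (by positivity), rieszPot_eq_interaction, mul_add]
  exact add_le_add (by gcongr) hV

theorem energy_smul_le_of_le_one (hN : 0 < N) (hsN : s ≤ N)
    (hgmono : ∀ x : EuclideanSpace ℝ (Fin N), x ≠ 0 → ∀ l : ℝ, 1 ≤ l → g (l • x) ≤ g x)
    (hgint : Integrable g volume) {c : ℝ} (hc₀ : 0 < c) (hc₁ : c ≤ 1)
    (F : Set (EuclideanSpace ℝ (Fin N))) :
    energy N s g (c • F)
      ≤ energy N s g F + ENNReal.ofReal (1 - c ^ N) * (∫⁻ z, ENNReal.ofReal (g z)) * volume F := by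
  have hP : ENNReal.ofReal (c ^ ((N : ℝ) - s)) ≤ 1 :=
    ENNReal.ofReal_le_one.2 (Real.rpow_le_one hc₀.le hc₁ (by linarith))
  have hV := interaction_smul_set_le_of_le_one hc₀ hc₁ hgint.aemeasurable.ennreal_ofReal
    (ae_le_comp_smul_of_le_one hN hgmono hc₀ hc₁) hgint.lintegral_lt_top.ne F F
  rw [finrank_euclideanSpace_fin] at hV
  rw [energy, energy, fracPer_smul hc₀, rieszPot_eq_interaction, add_assoc]
  exact add_le_add (mul_le_of_le_one_left zero_le hP) hV

theorem exists_volume_eq_energy_le_sq_mul_of_lt (hN : 0 < N) (hs : 0 ≤ s)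
    (hgmono : ∀ x : EuclideanSpace ℝ (Fin N), x ≠ 0 → ∀ l : ℝ, 1 ≤ l → g (l • x) ≤ g x)
    {m m' : ℝ} {F : Set (EuclideanSpace ℝ (Fin N))} (hF : MeasurableSet F)
    (hvol : volume F = ENNReal.ofReal m') (hm' : 0 < m') (hlt : m' < m) :
    ∃ G, MeasurableSet G ∧ volume G = ENNReal.ofReal m ∧
      energy N s g G ≤ ENNReal.ofReal ((m / m') ^ 2) * energy N s g F := by
  have hq : 1 ≤ m / m' := (one_le_div hm').2 hlt.le
  refine ⟨((m / m') ^ (N⁻¹ : ℝ)) • F, hF.const_smul₀ _, ?_, ?_⟩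
  · rw [volume_rpow_inv_smul hN (by linarith), hvol, ← ENNReal.ofReal_mul (by linarith),
      div_mul_cancel₀ _ hm'.ne']
  · refine (energy_smul_le_of_one_le hN hs hgmono (Real.one_le_rpow hq (by positivity)) F).trans ?_
    rw [Real.rpow_inv_natCast_pow (by linarith) hN.ne', ENNReal.ofReal_pow (by linarith)]

theorem exists_volume_eq_energy_le_add_of_lt (hN : 0 < N) (hsN : s ≤ N) (hg0 : 0 ≤ᵐ[volume] g)
    (hgmono : ∀ x : EuclideanSpace ℝ (Fin N), x ≠ 0 → ∀ l : ℝ, 1 ≤ l → g (l • x) ≤ g x)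
    (hgint : Integrable g volume) {m m' : ℝ} (hm : 0 < m) {F : Set (EuclideanSpace ℝ (Fin N))}
    (hF : MeasurableSet F) (hvol : volume F = ENNReal.ofReal m') (hlt : m < m') :
    ∃ G, MeasurableSet G ∧ volume G = ENNReal.ofReal m ∧
      energy N s g G ≤ energy N s g F + ENNReal.ofReal ((∫ z, g z) * (m' - m)) := by
  have hm' : 0 < m' := hm.trans hlt
  have hq : m / m' ≤ 1 := (div_le_one hm').2 hlt.le
  refine ⟨((m / m') ^ (N⁻¹ : ℝ)) • F, hF.const_smul₀ _, ?_, ?_⟩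
  · rw [volume_rpow_inv_smul hN (by positivity), hvol, ← ENNReal.ofReal_mul (by positivity),
      div_mul_cancel₀ _ hm'.ne']
  · refine (energy_smul_le_of_le_one hN hsN hgmono hgint (by positivity)
      (Real.rpow_le_one (by positivity) hq (by positivity)) F).trans_eq ?_
    rw [Real.rpow_inv_natCast_pow (by positivity) hN.ne', ← ofReal_integral_eq_lintegral_ofReal
      hgint hg0, hvol, ← ENNReal.ofReal_mul (by linarith), ← ENNReal.ofReal_mul
      (mul_nonneg (sub_nonneg.2 hq) (integral_nonneg_of_ae hg0))]
    congr 2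
    field_simp

theorem ae_nonneg_of_nonneg_of_ne_zero (hN : 0 < N)
    (hg0 : ∀ x : EuclideanSpace ℝ (Fin N), x ≠ 0 → 0 ≤ g x) : 0 ≤ᵐ[volume] g := by
  have := nontrivial_euclideanSpace hN
  filter_upwards [Measure.ae_ne volume 0] with z hz using hg0 z hz

theorem exists_volume_eq_energy_lt_top (hN : 0 < N) (hs₀ : 0 < s) (hs₁ : s < 1)
    (hgint : Integrable g volume) {m : ℝ} (hm : 0 < m) :
    ∃ B, MeasurableSet B ∧ volume B = ENNReal.ofReal m ∧ energy N s g B < ∞ := by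
  have := nontrivial_euclideanSpace hN
  set β := (volume (Metric.ball (0 : EuclideanSpace ℝ (Fin N)) 1)).toReal
  have hβ : 0 < β := ENNReal.toReal_pos (Metric.measure_ball_pos _ _ one_pos).ne'
    measure_ball_lt_top.ne
  set c := (m / β) ^ (N⁻¹ : ℝ)
  have hvol : volume (c • Metric.ball (0 : EuclideanSpace ℝ (Fin N)) 1) = ENNReal.ofReal m := by
    rw [volume_rpow_inv_smul hN (by positivity), ← ofReal_toReal measure_ball_lt_top.ne,
      ← ENNReal.ofReal_mul (by positivity), div_mul_cancel₀ _ hβ.ne']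
  refine ⟨c • Metric.ball 0 1, measurableSet_ball.const_smul₀ c, hvol, ?_⟩
  rw [energy, fracPer_smul (by positivity), rieszPot_eq_interaction]
  refine ENNReal.add_lt_top.2 ⟨ENNReal.mul_lt_top ofReal_lt_top (fracPer_ball_lt_top hN hs₀ hs₁),
    (interaction_le_lintegral_mul_measure_left _ _).trans_lt ?_⟩
  rw [hvol]
  exact ENNReal.mul_lt_top hgint.lintegral_lt_top ofReal_lt_top

theorem exists_energy_le_add_penalty (hN : 0 < N) (hs : s ∈ Ioo (0 : ℝ) 1) {m : ℝ} (hm : 0 < m)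
    (hg0 : ∀ x : EuclideanSpace ℝ (Fin N), x ≠ 0 → 0 ≤ g x)
    (hgmono : ∀ x : EuclideanSpace ℝ (Fin N), x ≠ 0 → ∀ l : ℝ, 1 ≤ l → g (l • x) ≤ g x)
    (hgint : Integrable g volume) :
    ∃ μ₀ : ℝ, 0 < μ₀ ∧ ∀ E : Set (EuclideanSpace ℝ (Fin N)),
      (∀ F, MeasurableSet F → volume F = ENNReal.ofReal m → energy N s g E ≤ energy N s g F) →
      ∀ F, MeasurableSet F → energy N s g E ≤ energy N s g F + penalty N μ₀ m F := by
  have hg := ae_nonneg_of_nonneg_of_ne_zero hN hg0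
  have hsN : s ≤ N := hs.2.le.trans (Nat.one_le_cast.2 hN)
  obtain ⟨B, hB, hBvol, hBfin⟩ := exists_volume_eq_energy_lt_top hN hs.1 hs.2 hgint hm
  set C := (energy N s g B).toReal
  set a := ∫ z, g z
  have ha : 0 ≤ a := integral_nonneg_of_ae hg
  have hC : 0 ≤ C := toReal_nonneg
  have hCm : 0 ≤ 8 * C / m := by positivity
  refine ⟨a + 8 * C / m + 1, by positivity, fun E hmin F hF => ?_⟩
  rcases eq_or_ne (volume F) ∞ with hinf | hfin
  · simp [penalty, hinf, ENNReal.mul_top, show 0 < a + 8 * C / m + 1 by positivity]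
  have hvol : volume F = ENNReal.ofReal (volume F).toReal := (ofReal_toReal hfin).symm
  rw [penalty, hvol, ofReal_tsub_add_tsub_eq_abs toReal_nonneg hm.le,
    ← ENNReal.ofReal_mul (by positivity)]
  refine le_add_ofReal_mul_abs_of_rescaling hm hC (by linarith) ?_
    ((hmin B hB hBvol).trans (ofReal_toReal hBfin.ne).ge) hmin hF hvol
    (fun h₀ hlt => exists_volume_eq_energy_le_sq_mul_of_lt hN hs.1.le hgmono hF hvol h₀ hlt)
    (fun hlt => exists_volume_eq_energy_le_add_of_lt hN hsN hg hgmono hgint hm hF hvol hlt)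
  rw [add_mul, add_mul, div_mul_cancel₀ _ hm.ne']
  nlinarith

theorem fracPer_le_add_of_energy_le_add_penalty (hg : 0 ≤ᵐ[volume] g)
    (hgint : Integrable g volume) {μ m : ℝ} (hμ : 0 ≤ μ) {E F : Set (EuclideanSpace ℝ (Fin N))}
    (hEvol : volume E = ENNReal.ofReal m)
    (hEF : energy N s g E ≤ energy N s g F + penalty N μ m F) :
    fracPer N s E
      ≤ fracPer N s F + ENNReal.ofReal (2 * (∫ x, g x) + μ) * volume (symmDiff E F) := by
  set a := ∫ x, g x
  have ha : 0 ≤ a := integral_nonneg_of_ae hg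
  have hka : ∫⁻ z, ENNReal.ofReal (g z) = ENNReal.ofReal a :=
    (ofReal_integral_eq_lintegral_ofReal hgint hg).symm
  set Δ := volume (symmDiff E F)
  have hV : rieszPot N g F ≤ rieszPot N g E + ENNReal.ofReal (2 * a) * Δ :=
    calc rieszPot N g F ≤ rieszPot N g E + 2 * ENNReal.ofReal a * volume (F \ E) := by
          rw [← hka]
          exact interaction_self_le_add_measure_sdiff hgint.aemeasurable.ennreal_ofReal E F
      _ ≤ rieszPot N g E + ENNReal.ofReal (2 * a) * Δ := by
          rw [ENNReal.ofReal_mul zero_le_two, ENNReal.ofReal_ofNat]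
          gcongr
          exact measure_mono (by rw [symmDiff_def]; exact subset_union_right)
  have hpen : penalty N μ m F ≤ ENNReal.ofReal μ * Δ := by
    rw [penalty, ← hEvol]
    gcongr
    exact tsub_add_tsub_le_measure_symmDiff _ _ _
  have hVE : rieszPot N g E ≠ ∞ := by
    rw [rieszPot_eq_interaction]
    refine ((interaction_le_lintegral_mul_measure_left E E).trans_lt ?_).ne
    rw [hEvol]
    exact ENNReal.mul_lt_top hgint.lintegral_lt_top ofReal_lt_top
  refine ENNReal.le_of_add_le_add_right hVE ?_
  calc fracPer N s E + rieszPot N g E ≤ fracPer N s F + rieszPot N g F + penalty N μ m F := hEF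
    _ ≤ fracPer N s F + (rieszPot N g E + ENNReal.ofReal (2 * a) * Δ) + ENNReal.ofReal μ * Δ := by
        gcongr
    _ = fracPer N s F + ENNReal.ofReal (2 * a + μ) * Δ + rieszPot N g E := by
        rw [ENNReal.ofReal_add (by positivity) hμ, add_mul]
        ring

end Energy

theorem fracPer_of_dim_zero {s : ℝ} (E : Set (EuclideanSpace ℝ (Fin 0))) : fracPer 0 s E = 0 := by
  rcases E.eq_empty_or_nonempty with rfl | hE
  · simp [fracPer]
  · simp [fracPer, Subsingleton.eq_univ_of_nonempty hE]

theorem energy_le_add_penalty_of_dim_zero {s : ℝ} (g : EuclideanSpace ℝ (Fin 0) → ℝ) {m : ℝ}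
    (hm : 0 < m) {E F : Set (EuclideanSpace ℝ (Fin 0))} (hE : volume E = ENNReal.ofReal m) :
    energy 0 s g E ≤ energy 0 s g F + penalty 0 (|g 0| * m + 1) m F := by
  have hEu : E = univ := Subsingleton.eq_univ_of_nonempty
    (nonempty_of_measure_ne_zero (by rw [hE]; exact (ENNReal.ofReal_pos.2 hm).ne'))
  subst hEu
  rcases F.eq_empty_or_nonempty with rfl | hF
  · have huniv : energy 0 s g univ
        = ENNReal.ofReal (g 0) * ENNReal.ofReal m * ENNReal.ofReal m := by
      simp [energy, fracPer_of_dim_zero, rieszPot, hE,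
        Subsingleton.elim _ (0 : EuclideanSpace ℝ (Fin 0))]
    have hempty : energy 0 s g ∅ = 0 := by simp [energy, fracPer_of_dim_zero, rieszPot]
    rw [huniv, hempty, penalty, measure_empty, zero_tsub, tsub_zero, zero_add, zero_add]
    simp_rw [← ENNReal.ofReal_mul' hm.le]
    exact ENNReal.ofReal_le_ofReal
      (by nlinarith [mul_le_mul_of_nonneg_right (le_abs_self (g 0)) (mul_nonneg hm.le hm.le)])
  · rw [Subsingleton.eq_univ_of_nonempty hF]
    exact le_self_add

theorem almost_minimality_general (N : ℕ) (s : ℝ) (hs : s ∈ Set.Ioo (0:ℝ) 1) (m : ℝ) (hm : 0 < m)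
    (g : EuclideanSpace ℝ (Fin N) → ℝ)
    (hg0 : ∀ x : EuclideanSpace ℝ (Fin N), x ≠ 0 → 0 ≤ g x)
    (hgmono : ∀ x : EuclideanSpace ℝ (Fin N), x ≠ 0 → ∀ l : ℝ, 1 ≤ l → g (l • x) ≤ g x)
    (hgint : Integrable g volume) :
    ∃ μ₀ : ℝ, 0 < μ₀ ∧
      ∀ E : Set (EuclideanSpace ℝ (Fin N)), MeasurableSet E → volume E = ENNReal.ofReal m →
        (∀ F : Set (EuclideanSpace ℝ (Fin N)), MeasurableSet F → volume F = ENNReal.ofReal m →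
          fracPer N s E + rieszPot N g E ≤ fracPer N s F + rieszPot N g F) →
        (∀ F : Set (EuclideanSpace ℝ (Fin N)), MeasurableSet F →
          fracPer N s E + rieszPot N g E
            ≤ fracPer N s F + rieszPot N g F + penalty N μ₀ m F)
        ∧ ∀ F : Set (EuclideanSpace ℝ (Fin N)), Bornology.IsBounded F → MeasurableSet F →
            fracPer N s E
              ≤ fracPer N s F
                + ENNReal.ofReal (2 * (∫ x, g x) + μ₀) * volume (symmDiff E F) := by
  rcases N.eq_zero_or_pos with rfl | hN
  · refine ⟨|g 0| * m + 1, by positivity, fun E _ hEvol _ => ⟨fun F _ => ?_, fun F _ _ => ?_⟩⟩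
    · exact energy_le_add_penalty_of_dim_zero g hm hEvol
    · simp [fracPer_of_dim_zero]
  obtain ⟨μ₀, hμ₀, hpen⟩ := exists_energy_le_add_penalty hN hs hm hg0 hgmono hgint
  refine ⟨μ₀, hμ₀, fun E _ hEvol hmin => ⟨hpen E hmin, fun F _ hF => ?_⟩⟩
  exact fracPer_le_add_of_energy_le_add_penalty (ae_nonneg_of_nonneg_of_ne_zero hN hg0) hgint
    hμ₀.le hEvol (hpen E hmin F hF)

/-- Λ-minimality: there exists a penalization constant `μ₀ > 0` for which every
volume-constrained minimizer `E` of `ℰ_{s,g} = P_s + V_g` minimizes the penalized functional,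
and satisfies `P_s(E) ≤ P_s(F) + (2‖g‖_{L¹} + μ₀)|E Δ F|` for every bounded measurable `F`. -/
theorem almost_minimality (N : ℕ) (s : ℝ) (hs : s ∈ Set.Ioo (0:ℝ) 1) (m : ℝ) (hm : 0 < m)
    (g : EuclideanSpace ℝ (Fin N) → ℝ)
    (hg0 : ∀ x : EuclideanSpace ℝ (Fin N), x ≠ 0 → 0 ≤ g x)
    (hgmono : ∀ x : EuclideanSpace ℝ (Fin N), x ≠ 0 → ∀ l : ℝ, 1 ≤ l → g (l • x) ≤ g x)
    (hgsymm : ∀ x : EuclideanSpace ℝ (Fin N), x ≠ 0 → g (-x) = g x)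
    (hgint : Integrable g volume) :
    ∃ μ₀ : ℝ, 0 < μ₀ ∧
      ∀ E : Set (EuclideanSpace ℝ (Fin N)), MeasurableSet E → volume E = ENNReal.ofReal m →
        (∀ F : Set (EuclideanSpace ℝ (Fin N)), MeasurableSet F → volume F = ENNReal.ofReal m →
          fracPer N s E + rieszPot N g E ≤ fracPer N s F + rieszPot N g F) →
        (∀ F : Set (EuclideanSpace ℝ (Fin N)), MeasurableSet F →
          fracPer N s E + rieszPot N g E
            ≤ fracPer N s F + rieszPot N g F + penalty N μ₀ m F)
        ∧ ∀ F : Set (EuclideanSpace ℝ (Fin N)), Bornology.IsBounded F → MeasurableSet F →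
            fracPer N s E
              ≤ fracPer N s F
                + ENNReal.ofReal (2 * (∫ x, g x) + μ₀) * volume (symmDiff E F) :=
  almost_minimality_general N s hs m hm g hg0 hgmono hgint
end
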